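/- If A is an n×n real symmetric matrix and B = Q A Qᵀ where Q is a Givens rotation in the (p,q)-plane chosen so that b_{pq} = b_{qp} = 0, then b_{pp}² + b_{qq}² = a_{pp}² + a_{qq}² + 2·a_{pq}². -/
import Mathlib

open Matrix

private lemma aux_sum {n : ℕ} (p q : Fin n) (hpq : p ≠ q) (a b : ℝ) (v : Fin n → ℝ) :
    ∑ k, (if k = p then a else if k = q then b else 0) * v k = a * v p + b * v q := by
  have h : ∀ k, (if k = p then a else if k = q then b else 0) * v k
      = (if k = p then a * v p else 0) + (if k = q then b * v q else 0) := by
    intro k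
    by_cases h1 : k = p
    · subst h1; simp [hpq]
    · by_cases h2 : k = q
      · subst h2; simp [Ne.symm hpq]
      · simp [h1, h2]
  rw [Finset.sum_congr rfl (fun k _ => h k), Finset.sum_add_distrib,
    Finset.sum_ite_eq' _ p, Finset.sum_ite_eq' _ q]
  simp

theorem stmt0 {n : ℕ} (A : Matrix (Fin n) (Fin n) ℝ) (hA : A.IsSymm)
    (p q : Fin n) (hpq : p ≠ q) (c s : ℝ) (hcs : c ^ 2 + s ^ 2 = 1)
    (Q : Matrix (Fin n) (Fin n) ℝ)
    (hQ : Q = Matrix.of fun i j =>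
      if i = p then (if j = p then c else if j = q then -s else 0)
      else if i = q then (if j = p then s else if j = q then c else 0)
      else if i = j then (1 : ℝ) else 0)
    (B : Matrix (Fin n) (Fin n) ℝ) (hB : B = Q * A * Qᵀ)
    (hann : B p q = 0 ∧ B q p = 0) :
    B p p ^ 2 + B q q ^ 2 = A p p ^ 2 + A q q ^ 2 + 2 * A p q ^ 2 := by
  have hQp : ∀ k, Q p k = (if k = p then c else if k = q then -s else 0) := by
    intro k; simp [hQ]
  have hQq : ∀ k, Q q k = (if k = p then s else if k = q then c else 0) := by
    intro k; simp [hQ, Ne.symm hpq]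
  have hQAp : ∀ l, (Q * A) p l = c * A p l - s * A q l := by
    intro l
    rw [mul_apply]
    rw [Finset.sum_congr rfl (fun k _ => by rw [hQp k]),
      aux_sum p q hpq c (-s) (fun k => A k l)]
    ring
  have hQAq : ∀ l, (Q * A) q l = s * A p l + c * A q l := by
    intro l
    rw [mul_apply]
    rw [Finset.sum_congr rfl (fun k _ => by rw [hQq k]),
      aux_sum p q hpq s c (fun k => A k l)]
  have hApq : A q p = A p q := by
    conv_lhs => rw [← hA]
    rfl
  have hBpp : B p p = c * (c * A p p - s * A q p) - s * (c * A p q - s * A q q) := by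
    rw [hB, mul_apply]
    have : ∀ l, (Q * A) p l * Qᵀ l p
        = (if l = p then c else if l = q then -s else 0) * (Q * A) p l := by
      intro l; rw [transpose_apply, hQp l]; ring
    rw [Finset.sum_congr rfl (fun l _ => this l),
      aux_sum p q hpq c (-s) (fun l => (Q * A) p l)]
    rw [hQAp, hQAp]; ring
  have hBqq : B q q = s * (s * A p p + c * A q p) + c * (s * A p q + c * A q q) := by
    rw [hB, mul_apply]
    have : ∀ l, (Q * A) q l * Qᵀ l q
        = (if l = p then s else if l = q then c else 0) * (Q * A) q l := by
      intro l; rw [transpose_apply, hQq l]; ring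
    rw [Finset.sum_congr rfl (fun l _ => this l),
      aux_sum p q hpq s c (fun l => (Q * A) q l)]
    rw [hQAq, hQAq]
  have hBpq : B p q = c * (s * A p p + c * A q p) - s * (s * A p q + c * A q q) := by
    rw [hB, mul_apply]
    have : ∀ l, (Q * A) p l * Qᵀ l q
        = (if l = p then s else if l = q then c else 0) * (Q * A) p l := by
      intro l; rw [transpose_apply, hQq l]; ring
    rw [Finset.sum_congr rfl (fun l _ => this l),
      aux_sum p q hpq s c (fun l => (Q * A) p l)]
    rw [hQAp, hQAp, hApq]; ring
  have h0 := hann.1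
  rw [hBpq] at h0
  rw [hApq] at h0
  rw [hBpp, hBqq, hApq]
  linear_combination (-2*(c*(s*A p p + c*A p q) - s*(s*A p q + c*A q q)))*h0 +
    (c^2+s^2+1)*(A p p^2 + A q q^2 + 2*A p q^2)*hcs
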